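/- Let f = (f_n) ∈ M_1, let η > 0, m ∈ ℕ and E ∈ D_m be given. Then there exist g = (g_i) ∈ M_1 and a sequence (F_i)_{i∈ℕ} ∈ K such that ‖f − g‖_1 < η, F_m = E, and limsup_{i→∞} g_i(F_i) = +∞, where g_i(F_i) = (1/P(F_i)) ∫_{F_i} g_i dP. -/

import Mathlib

/-!
Starting from `E`, descend through the atoms, choosing at each level the child `C` that minimises
the weight `P(C) + lim_N ∫_C |f_N|`. This weight is subadditive over the children of an atom, and
by (A) the chain branches infinitely often, each time at least halving the weight of the chosen
atom; hence `P(F_i) → 0` and `∫_{F_i} |f_i| → 0`. Adding to `f` the martingale of the point mass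
`ε δ_F` (equal to `ε / P(F_i)` on `F_i` and `0` elsewhere, of norm `ε`) gives
`g_i(F_i) = (∫_{F_i} f_i + ε) / P(F_i) → ∞`.
-/

open MeasureTheory Filter Set
open scoped ENNReal Topology

noncomputable section

namespace MartingalePaper

variable {Ω : Type}

/-- The discrete topology on `Set Ω`; each finite partition `D n` thus carries the
discrete topology, and `ℕ → Set Ω` the product topology. -/
instance : TopologicalSpace (Set Ω) := ⊥

/-- `(D n)` is a sequence of finite measurable partitions of `Ω`, each refined by the next. -/
def IsPartitionSeq [MeasurableSpace Ω] (D : ℕ → Finset (Set Ω)) : Prop :=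
  (∀ n, ∀ A ∈ D n, MeasurableSet A) ∧
  (∀ n, ∀ A ∈ D n, A.Nonempty) ∧
  (∀ n, (D n : Set (Set Ω)).PairwiseDisjoint id) ∧
  (∀ n, ⋃ A ∈ D n, A = (Set.univ : Set Ω)) ∧
  (∀ n, ∀ A ∈ D (n + 1), ∃ B ∈ D n, A ⊆ B)

/-- Standing Assumptions (A). -/
def AssumptionA [MeasurableSpace Ω] (P : Measure Ω) (D : ℕ → Finset (Set Ω)) : Prop :=
  (∀ n, ∀ A ∈ D n, 0 < P A) ∧ (∀ n, ∀ A ∈ D n, ∃ m, n < m ∧ A ∉ D m)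

/-- The compact metrizable space `K` associated to the filtration: decreasing chains of atoms. -/
abbrev Kt (D : ℕ → Finset (Set Ω)) : Type _ :=
  {x : ℕ → Set Ω // (∀ n, x n ∈ D n) ∧ ∀ n m : ℕ, n ≤ m → x m ⊆ x n}

/-- The function on `Ω` determined by the values `f n A` on the atoms `A ∈ D n`. -/
def mval (D : ℕ → Finset (Set Ω)) (f : ℕ → Set Ω → ℝ) (n : ℕ) (w : Ω) : ℝ :=
  ∑ A ∈ D n, A.indicator (fun _ => f n A) w

/-- A martingale adapted to the filtration `(σ(D n))`, in its canonical representation by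
the (a.e. constant) values on the atoms:  `f n A` is the value of the `n`-th function on
the atom `A ∈ D n`. -/
def IsMart [MeasurableSpace Ω] (P : Measure Ω) (D : ℕ → Finset (Set Ω))
    (f : ℕ → Set Ω → ℝ) : Prop :=
  (∀ n, ∀ A : Set Ω, A ∉ D n → f n A = 0) ∧
  ∀ n m : ℕ, n ≤ m → ∀ A ∈ D n,
    ∫ w in A, mval D f n w ∂P = ∫ w in A, mval D f m w ∂P

/-- `‖f_n‖_{L^p}`. -/
def lpNorm [MeasurableSpace Ω] (P : Measure Ω) (D : ℕ → Finset (Set Ω)) (p : ℝ≥0∞)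
    (f : ℕ → Set Ω → ℝ) (n : ℕ) : ℝ≥0∞ :=
  eLpNorm (mval D f n) p P

/-- `‖f‖_p = sup_n ‖f_n‖_{L^p}`. -/
def martNorm [MeasurableSpace Ω] (P : Measure Ω) (D : ℕ → Finset (Set Ω)) (p : ℝ≥0∞)
    (f : ℕ → Set Ω → ℝ) : ℝ≥0∞ :=
  ⨆ n, lpNorm P D p f n

/-- `M_p`, the space of `L^p`-bounded martingales adapted to the filtration. -/
def Mart [MeasurableSpace Ω] (P : Measure Ω) (D : ℕ → Finset (Set Ω)) (p : ℝ≥0∞) : Type _ :=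
  {f : ℕ → Set Ω → ℝ // IsMart P D f ∧ martNorm P D p f ≠ ∞}

/-- The norm topology on `M_p`: the topology generated by the balls of the norm `‖·‖_p`
(which is exactly the topology of this metric). -/
instance [MeasurableSpace Ω] (P : Measure Ω) (D : ℕ → Finset (Set Ω)) (p : ℝ≥0∞) :
    TopologicalSpace (Mart P D p) :=
  TopologicalSpace.generateFrom
    {s | ∃ (f : Mart P D p) (ε : ℝ≥0∞), 0 < ε ∧
      s = {g : Mart P D p | martNorm P D p (fun k A => g.1 k A - f.1 k A) < ε}}

/-- `limsup f_n(x) = +∞` and `liminf f_n(x) = -∞`. -/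
def DivergesAt (D : ℕ → Finset (Set Ω)) (f : ℕ → Set Ω → ℝ) (x : Kt D) : Prop :=
  Filter.limsup (fun n => ((f n (x.1 n) : ℝ) : EReal)) Filter.atTop = ⊤ ∧
  Filter.liminf (fun n => ((f n (x.1 n) : ℝ) : EReal)) Filter.atTop = ⊥

lemma tendsto_zero_of_antitone_of_frequently_halving {s : ℕ → ℝ} (hs0 : ∀ k, 0 ≤ s k)
    (hs : Antitone s) (hhalf : ∃ᶠ k in atTop, 2 * s (k + 1) ≤ s k) :
    Tendsto s atTop (𝓝 0) := by
  have hbdd : BddBelow (range s) := ⟨0, by rintro _ ⟨k, rfl⟩; exact hs0 k⟩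
  have hlim := tendsto_atTop_ciInf hs hbdd
  suffices hc : ⨅ k, s k = 0 by rwa [hc] at hlim
  by_contra hc
  have hpos : 0 < ⨅ k, s k := (le_ciInf hs0).lt_of_ne' hc
  have hlt : ∀ᶠ k in atTop, s k < 2 * ⨅ k, s k := hlim.eventually_lt_const (by linarith)
  obtain ⟨k, hk, hsk⟩ := (hhalf.and_eventually hlt).exists
  have := ciInf_le hbdd (k + 1)
  linarith

lemma tendsto_add_div_atTop {ι : Type*} {l : Filter ι} {u p : ι → ℝ} {ε : ℝ} (hε : 0 < ε)
    (hp : ∀ i, 0 < p i) (hp0 : Tendsto p l (𝓝 0)) (hup : Tendsto (fun i => u i * p i) l (𝓝 0)) :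
    Tendsto (fun i => u i + ε / p i) l atTop := by
  have hinv : Tendsto (fun i => (p i)⁻¹) l atTop :=
    (tendsto_nhdsWithin_iff.2 ⟨hp0, Eventually.of_forall hp⟩).inv_tendsto_nhdsGT_zero
  have hnum : Tendsto (fun i => u i * p i + ε) l (𝓝 ε) := by simpa using hup.add_const ε
  refine (hnum.pos_mul_atTop hε hinv).congr fun i => ?_
  field_simp [(hp i).ne']

open scoped Classical in
def subAtoms (D : ℕ → Finset (Set Ω)) (n : ℕ) (B : Set Ω) : Finset (Set Ω) :=
  (D n).filter (· ⊆ B)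

lemma mem_subAtoms {D : ℕ → Finset (Set Ω)} {n : ℕ} {B C : Set Ω} :
    C ∈ subAtoms D n B ↔ C ∈ D n ∧ C ⊆ B := by
  simp [subAtoms]

namespace IsPartitionSeq

variable [MeasurableSpace Ω] {D : ℕ → Finset (Set Ω)} {k n : ℕ} {A B C : Set Ω} {w : Ω}

lemma measurableSet (hD : IsPartitionSeq D) (hA : A ∈ D n) : MeasurableSet A :=
  hD.1 n A hA

lemma eq_of_mem_of_mem (hD : IsPartitionSeq D) (hA : A ∈ D n) (hB : B ∈ D n) (hwA : w ∈ A)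
    (hwB : w ∈ B) : A = B := by
  by_contra hne
  exact disjoint_left.1 (hD.2.2.1 n hA hB hne) hwA hwB

lemma exists_mem (hD : IsPartitionSeq D) (n : ℕ) (w : Ω) : ∃ A ∈ D n, w ∈ A := by
  have hw : w ∈ ⋃ A ∈ D n, A := by rw [hD.2.2.2.1 n]; trivial
  simpa using hw

lemma exists_superset_of_le (hD : IsPartitionSeq D) (hkn : k ≤ n) (hC : C ∈ D n) :
    ∃ B ∈ D k, C ⊆ B := by
  induction n, hkn using Nat.le_induction generalizing C with
  | base => exact ⟨C, hC, subset_rfl⟩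
  | succ n _ ih =>
    obtain ⟨B', hB', hCB'⟩ := hD.2.2.2.2 n C hC
    obtain ⟨B, hB, hB'B⟩ := ih hB'
    exact ⟨B, hB, hCB'.trans hB'B⟩

lemma subset_of_mem_of_mem (hD : IsPartitionSeq D) (hkn : k ≤ n) (hB : B ∈ D k) (hC : C ∈ D n)
    (hwB : w ∈ B) (hwC : w ∈ C) : C ⊆ B := by
  obtain ⟨B', hB', hCB'⟩ := hD.exists_superset_of_le hkn hC
  rwa [hD.eq_of_mem_of_mem hB hB' hwB (hCB' hwC)]

lemma biUnion_subAtoms (hD : IsPartitionSeq D) (hkn : k ≤ n) (hB : B ∈ D k) :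
    ⋃ C ∈ subAtoms D n B, C = B := by
  refine (iUnion₂_subset fun C hC => (mem_subAtoms.1 hC).2).antisymm fun w hw => ?_
  obtain ⟨C, hC, hwC⟩ := hD.exists_mem n w
  exact mem_biUnion (mem_subAtoms.2 ⟨hC, hD.subset_of_mem_of_mem hkn hB hC hw hwC⟩) hwC

lemma pairwiseDisjoint_subAtoms (hD : IsPartitionSeq D) (n : ℕ) (B : Set Ω) :
    (subAtoms D n B : Set (Set Ω)).PairwiseDisjoint id :=
  (hD.2.2.1 n).subset fun _ hC => (mem_subAtoms.1 hC).1

lemma subAtoms_nonempty (hD : IsPartitionSeq D) (hkn : k ≤ n) (hB : B ∈ D k) :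
    (subAtoms D n B).Nonempty := by
  obtain ⟨w, hw⟩ := hD.2.1 k B hB
  obtain ⟨C, hC, hwC⟩ := hD.exists_mem n w
  exact ⟨C, mem_subAtoms.2 ⟨hC, hD.subset_of_mem_of_mem hkn hB hC hw hwC⟩⟩

lemma exists_ne_mem_subAtoms (hD : IsPartitionSeq D) (hkn : k ≤ n) (hB : B ∈ D k)
    (hC : C ∈ subAtoms D n B) (hCB : C ≠ B) : ∃ C' ∈ subAtoms D n B, C' ≠ C := by
  by_contra! hall
  refine hCB ((mem_subAtoms.1 hC).2.antisymm ?_)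
  rw [← hD.biUnion_subAtoms hkn hB]
  exact iUnion₂_subset fun C' hC' => (hall C' hC').le

end IsPartitionSeq

lemma mval_add (D : ℕ → Finset (Set Ω)) (f g : ℕ → Set Ω → ℝ) (n : ℕ) :
    mval D (fun k A => f k A + g k A) n = mval D f n + mval D g n := by
  ext w
  simp only [mval, Pi.add_apply, ← Finset.sum_add_distrib]
  exact Finset.sum_congr rfl fun A _ => congrFun (indicator_add A _ _) w

section Mval

variable [MeasurableSpace Ω] {P : Measure Ω} {D : ℕ → Finset (Set Ω)} {k n : ℕ} {B C : Set Ω}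

lemma mval_eq_of_mem (hD : IsPartitionSeq D) (f : ℕ → Set Ω → ℝ) (hC : C ∈ D n) {w : Ω}
    (hw : w ∈ C) : mval D f n w = f n C := by
  rw [mval, Finset.sum_eq_single_of_mem C hC fun A hA hAC =>
    indicator_of_notMem (fun hwA => hAC (hD.eq_of_mem_of_mem hA hC hwA hw)) _]
  exact indicator_of_mem hw _

lemma stronglyMeasurable_mval (hD : IsPartitionSeq D) (f : ℕ → Set Ω → ℝ) (n : ℕ) :
    StronglyMeasurable (mval D f n) :=
  Finset.stronglyMeasurable_fun_sum _ fun _ hA =>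
    stronglyMeasurable_const.indicator (hD.measurableSet hA)

lemma integrable_mval (hD : IsPartitionSeq D) [IsFiniteMeasure P] (f : ℕ → Set Ω → ℝ) (n : ℕ) :
    Integrable (mval D f n) P :=
  integrable_finsetSum _ fun _ hA => (integrable_const _).indicator (hD.measurableSet hA)

lemma setIntegral_comp_mval (hD : IsPartitionSeq D) (f : ℕ → Set Ω → ℝ) (g : ℝ → ℝ)
    (hC : C ∈ D n) : ∫ w in C, g (mval D f n w) ∂P = P.real C * g (f n C) := by
  rw [setIntegral_congr_fun (hD.measurableSet hC) fun w hw => by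
    rw [mval_eq_of_mem hD f hC hw], setIntegral_const, smul_eq_mul]

lemma setIntegral_eq_sum_subAtoms (hD : IsPartitionSeq D) (hkn : k ≤ n) (hB : B ∈ D k)
    {g : Ω → ℝ} (hg : Integrable g P) :
    ∫ w in B, g w ∂P = ∑ C ∈ subAtoms D n B, ∫ w in C, g w ∂P := by
  conv_lhs => rw [← hD.biUnion_subAtoms hkn hB]
  exact integral_biUnion_finset _ (fun C hC => hD.measurableSet (mem_subAtoms.1 hC).1)
    (hD.pairwiseDisjoint_subAtoms n B) fun _ _ => hg.integrableOn

lemma measureReal_eq_sum_subAtoms (hD : IsPartitionSeq D) [IsFiniteMeasure P] (hkn : k ≤ n)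
    (hB : B ∈ D k) : P.real B = ∑ C ∈ subAtoms D n B, P.real C := by
  simpa using setIntegral_eq_sum_subAtoms (P := P) hD hkn hB (integrable_const (1 : ℝ))

end Mval

section Martingale

variable [MeasurableSpace Ω] {P : Measure Ω} {D : ℕ → Finset (Set Ω)} {f g : ℕ → Set Ω → ℝ}

lemma IsMart.add [IsFiniteMeasure P] (hD : IsPartitionSeq D) (hf : IsMart P D f)
    (hg : IsMart P D g) : IsMart P D (fun k A => f k A + g k A) := by
  refine ⟨fun n A hA => by simp [hf.1 n A hA, hg.1 n A hA], fun n l hnl A hA => ?_⟩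
  simp only [mval_add, Pi.add_apply]
  rw [integral_add (integrable_mval hD f n).integrableOn (integrable_mval hD g n).integrableOn,
    integral_add (integrable_mval hD f l).integrableOn (integrable_mval hD g l).integrableOn,
    hf.2 n l hnl A hA, hg.2 n l hnl A hA]

lemma setIntegral_abs_mval_mono [IsFiniteMeasure P] (hD : IsPartitionSeq D) (hf : IsMart P D f)
    {k N' N : ℕ} (hkN' : k ≤ N') (hN'N : N' ≤ N) {B : Set Ω} (hB : B ∈ D k) :
    ∫ w in B, |mval D f N' w| ∂P ≤ ∫ w in B, |mval D f N w| ∂P := by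
  rw [setIntegral_eq_sum_subAtoms hD hkN' hB (integrable_mval hD f N').abs,
    setIntegral_eq_sum_subAtoms hD hkN' hB (integrable_mval hD f N).abs]
  refine Finset.sum_le_sum fun C hC => ?_
  have hC' := (mem_subAtoms.1 hC).1
  have hid : ∫ w in C, mval D f N' w ∂P = P.real C * f N' C := setIntegral_comp_mval hD f id hC'
  calc ∫ w in C, |mval D f N' w| ∂P = |∫ w in C, mval D f N' w ∂P| := by
        rw [setIntegral_comp_mval hD f abs hC', hid, abs_mul, abs_of_nonneg measureReal_nonneg]
    _ = |∫ w in C, mval D f N w ∂P| := by rw [hf.2 N' N hN'N C hC']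
    _ ≤ ∫ w in C, |mval D f N w| ∂P := abs_integral_le_integral_abs

lemma lpNorm_one_eq_ofReal [IsFiniteMeasure P] (hD : IsPartitionSeq D) (f : ℕ → Set Ω → ℝ)
    (n : ℕ) : lpNorm P D 1 f n = ENNReal.ofReal (∫ w, |mval D f n w| ∂P) := by
  rw [lpNorm, eLpNorm_one_eq_lintegral_enorm,
    ← ofReal_integral_norm_eq_lintegral_enorm (integrable_mval hD f n)]
  rfl

lemma setIntegral_abs_mval_le_martNorm [IsFiniteMeasure P] (hD : IsPartitionSeq D)
    (hfb : martNorm P D 1 f ≠ ∞) (n : ℕ) (B : Set Ω) :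
    ∫ w in B, |mval D f n w| ∂P ≤ (martNorm P D 1 f).toReal :=
  calc ∫ w in B, |mval D f n w| ∂P ≤ ∫ w, |mval D f n w| ∂P :=
        setIntegral_le_integral (integrable_mval hD f n).abs
          (Eventually.of_forall fun _ => abs_nonneg _)
    _ = (lpNorm P D 1 f n).toReal := by
        rw [lpNorm_one_eq_ofReal hD, ENNReal.toReal_ofReal (integral_nonneg fun _ => abs_nonneg _)]
    _ ≤ (martNorm P D 1 f).toReal := ENNReal.toReal_mono hfb (le_iSup (lpNorm P D 1 f) n)

lemma martNorm_add_le (hD : IsPartitionSeq D) {p : ℝ≥0∞} (hp : 1 ≤ p) :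
    martNorm P D p (fun k A => f k A + g k A) ≤ martNorm P D p f + martNorm P D p g :=
  iSup_le fun n => by
    rw [lpNorm, mval_add]
    exact (eLpNorm_add_le (stronglyMeasurable_mval hD f n).aestronglyMeasurable
      (stronglyMeasurable_mval hD g n).aestronglyMeasurable hp).trans
      (add_le_add (le_iSup (lpNorm P D p f) n) (le_iSup (lpNorm P D p g) n))

end Martingale

section Weight

variable [MeasurableSpace Ω] (P : Measure Ω) (D : ℕ → Finset (Set Ω)) (f : ℕ → Set Ω → ℝ)

/-- For `f ∈ M₁` and `B ∈ D n`, the integrals `∫_B |f_N|` increase with `N ≥ n` and are bounded,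
so this is their limit. -/
def variation (B : Set Ω) (n : ℕ) : ℝ :=
  ⨆ N, ∫ w in B, |mval D f (n + N) w| ∂P

def weight (B : Set Ω) (n : ℕ) : ℝ :=
  P.real B + variation P D f B n

variable {P D f} [IsFiniteMeasure P] {n : ℕ} {B C C' : Set Ω}

lemma bddAbove_setIntegral_abs_mval (hD : IsPartitionSeq D) (hfb : martNorm P D 1 f ≠ ∞)
    (B : Set Ω) (n : ℕ) :
    BddAbove (range fun N => ∫ w in B, |mval D f (n + N) w| ∂P) :=
  ⟨_, forall_mem_range.2 fun N => setIntegral_abs_mval_le_martNorm hD hfb (n + N) B⟩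

lemma setIntegral_abs_mval_le_variation (hD : IsPartitionSeq D) (hfb : martNorm P D 1 f ≠ ∞)
    (B : Set Ω) (n N : ℕ) :
    ∫ w in B, |mval D f (n + N) w| ∂P ≤ variation P D f B n :=
  le_ciSup (bddAbove_setIntegral_abs_mval hD hfb B n) N

lemma variation_nonneg (hD : IsPartitionSeq D) (hfb : martNorm P D 1 f ≠ ∞)
    (B : Set Ω) (n : ℕ) : 0 ≤ variation P D f B n :=
  (integral_nonneg fun _ => abs_nonneg _).trans (setIntegral_abs_mval_le_variation hD hfb B n 0)

lemma weight_nonneg (hD : IsPartitionSeq D) (hfb : martNorm P D 1 f ≠ ∞)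
    (B : Set Ω) (n : ℕ) : 0 ≤ weight P D f B n :=
  add_nonneg measureReal_nonneg (variation_nonneg hD hfb B n)

lemma measureReal_le_weight (hD : IsPartitionSeq D) (hfb : martNorm P D 1 f ≠ ∞)
    (B : Set Ω) (n : ℕ) : P.real B ≤ weight P D f B n :=
  le_add_of_nonneg_right (variation_nonneg hD hfb B n)

lemma abs_mul_measureReal_le_weight (hD : IsPartitionSeq D) (hfb : martNorm P D 1 f ≠ ∞)
    (hB : B ∈ D n) : |f n B * P.real B| ≤ weight P D f B n := by
  have h := setIntegral_abs_mval_le_variation hD hfb B n 0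
  rw [add_zero, setIntegral_comp_mval hD f abs hB] at h
  rw [abs_mul, abs_of_nonneg measureReal_nonneg, mul_comm]
  exact h.trans (le_add_of_nonneg_left measureReal_nonneg)

lemma sum_variation_subAtoms_le (hD : IsPartitionSeq D) (hf : IsMart P D f)
    (hfb : martNorm P D 1 f ≠ ∞) (hB : B ∈ D n) :
    ∑ C ∈ subAtoms D (n + 1) B, variation P D f C (n + 1) ≤ variation P D f B n := by
  have hlim : Tendsto (fun N => ∑ C ∈ subAtoms D (n + 1) B, ∫ w in C, |mval D f (n + 1 + N) w| ∂P)
      atTop (𝓝 (∑ C ∈ subAtoms D (n + 1) B, variation P D f C (n + 1))) :=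
    tendsto_finsetSum _ fun C hC => tendsto_atTop_ciSup
      (fun N N' hNN' => setIntegral_abs_mval_mono hD hf (Nat.le_add_right _ _) (by omega)
        (mem_subAtoms.1 hC).1)
      (bddAbove_setIntegral_abs_mval hD hfb C (n + 1))
  refine le_of_tendsto' hlim fun N => ?_
  rw [← setIntegral_eq_sum_subAtoms hD n.le_succ hB (integrable_mval hD f _).abs, add_assoc]
  exact setIntegral_abs_mval_le_variation hD hfb B n (1 + N)

lemma sum_weight_subAtoms_le (hD : IsPartitionSeq D) (hf : IsMart P D f)
    (hfb : martNorm P D 1 f ≠ ∞) (hB : B ∈ D n) :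
    ∑ C ∈ subAtoms D (n + 1) B, weight P D f C (n + 1) ≤ weight P D f B n := by
  unfold weight
  rw [Finset.sum_add_distrib, ← measureReal_eq_sum_subAtoms hD n.le_succ hB]
  exact add_le_add_right (sum_variation_subAtoms_le hD hf hfb hB) _

lemma weight_le_of_mem_subAtoms (hD : IsPartitionSeq D) (hf : IsMart P D f)
    (hfb : martNorm P D 1 f ≠ ∞) (hB : B ∈ D n) (hC : C ∈ subAtoms D (n + 1) B) :
    weight P D f C (n + 1) ≤ weight P D f B n :=
  (Finset.single_le_sum (fun E _ => weight_nonneg hD hfb E _) hC).trans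
    (sum_weight_subAtoms_le hD hf hfb hB)

lemma weight_add_weight_le (hD : IsPartitionSeq D) (hf : IsMart P D f)
    (hfb : martNorm P D 1 f ≠ ∞) (hB : B ∈ D n) (hC : C ∈ subAtoms D (n + 1) B)
    (hC' : C' ∈ subAtoms D (n + 1) B) (hne : C ≠ C') :
    weight P D f C (n + 1) + weight P D f C' (n + 1) ≤ weight P D f B n := by
  rw [← Finset.sum_pair (f := fun E => weight P D f E (n + 1)) hne]
  refine (Finset.sum_le_sum_of_subset_of_nonneg ?_ fun E _ _ => weight_nonneg hD hfb E _).trans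
    (sum_weight_subAtoms_le hD hf hfb hB)
  exact Finset.insert_subset hC (Finset.singleton_subset_iff.2 hC')

end Weight

lemma AssumptionA.measureReal_ne_zero [MeasurableSpace Ω] {P : Measure Ω} [IsFiniteMeasure P]
    {D : ℕ → Finset (Set Ω)} (hA : AssumptionA P D) {n : ℕ} {B : Set Ω} (hB : B ∈ D n) :
    P.real B ≠ 0 :=
  ENNReal.toReal_ne_zero.2 ⟨(hA.1 n B hB).ne', measure_ne_top P B⟩

lemma AssumptionA.exists_succ_ne [MeasurableSpace Ω] {P : Measure Ω} {D : ℕ → Finset (Set Ω)}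
    (hA : AssumptionA P D) {m : ℕ} {X : ℕ → Set Ω} (hX : ∀ k, X k ∈ D (m + k)) (k : ℕ) :
    ∃ l ≥ k, X (l + 1) ≠ X l := by
  by_contra! hstable
  have hconst : ∀ l ≥ k, X l = X k := fun l hkl => by
    induction l, hkl using Nat.le_induction with
    | base => rfl
    | succ l hkl ih => rw [hstable l hkl, ih]
  obtain ⟨n, hn, hXn⟩ := hA.2 (m + k) (X k) (hX k)
  have h := hX (n - m)
  rw [hconst (n - m) (by omega), Nat.add_sub_cancel' (by omega)] at h
  exact hXn h

lemma IsPartitionSeq.exists_kt_extend [MeasurableSpace Ω] {D : ℕ → Finset (Set Ω)}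
    (hD : IsPartitionSeq D) {m : ℕ} {X : ℕ → Set Ω} (hX : ∀ k, X k ∈ D (m + k))
    (hXsub : ∀ k, X (k + 1) ⊆ X k) : ∃ x : Kt D, ∀ k, x.1 (m + k) = X k := by
  obtain ⟨w, hw⟩ := hD.2.1 m (X 0) (hX 0)
  choose atom hatom hwatom using fun n => hD.exists_mem n w
  set x : ℕ → Set Ω := fun n => if n < m then atom n else X (n - m)
  have hx_of_le : ∀ n, m ≤ n → x n = X (n - m) := fun n hn => if_neg (by omega)
  have hx : ∀ n, x n ∈ D n := fun n => by
    by_cases hn : n < m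
    · simpa [x, hn] using hatom n
    · simpa [hx_of_le n (not_lt.1 hn), Nat.add_sub_cancel' (not_lt.1 hn)] using hX (n - m)
  have hwx : ∀ n ≤ m, w ∈ x n := fun n hn => by
    rcases hn.lt_or_eq with hn | rfl
    · simpa [x, hn] using hwatom n
    · simpa [hx_of_le n le_rfl] using hw
  have hanti : Antitone x := antitone_nat_of_succ_le fun n => by
    by_cases hn : n < m
    · exact hD.subset_of_mem_of_mem n.le_succ (hx n) (hx (n + 1)) (hwx n hn.le) (hwx (n + 1) hn)
    · rw [hx_of_le n (by omega), hx_of_le (n + 1) (by omega), Nat.sub_add_comm (by omega)]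
      exact hXsub _
  exact ⟨⟨x, hx, fun _ _ h => hanti h⟩, fun k => by simp [hx_of_le]⟩

section Chain

variable [MeasurableSpace Ω] {P : Measure Ω} [IsFiniteMeasure P] {D : ℕ → Finset (Set Ω)}
  {f : ℕ → Set Ω → ℝ} {m : ℕ} {E : Set Ω}

lemma exists_chain_weight_tendsto_zero (hD : IsPartitionSeq D) (hA : AssumptionA P D)
    (hf : IsMart P D f) (hfb : martNorm P D 1 f ≠ ∞) (hE : E ∈ D m) :
    ∃ X : ℕ → Set Ω, X 0 = E ∧ (∀ k, X k ∈ D (m + k)) ∧ (∀ k, X (k + 1) ⊆ X k) ∧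
      Tendsto (fun k => weight P D f (X k) (m + k)) atTop (𝓝 0) := by
  choose child hchild hmin using fun (k : ℕ) (A : {A // A ∈ D (m + k)}) =>
    Finset.exists_min_image (subAtoms D (m + k + 1) A.1) (fun C => weight P D f C (m + k + 1))
      (hD.subAtoms_nonempty (Nat.le_succ _) A.2)
  let X : (k : ℕ) → {A // A ∈ D (m + k)} := fun k =>
    Nat.rec (motive := fun k => {A // A ∈ D (m + k)}) ⟨E, hE⟩
      (fun k A => ⟨child k A, (mem_subAtoms.1 (hchild k A)).1⟩) k
  refine ⟨fun k => (X k).1, rfl, fun k => (X k).2, fun k => (mem_subAtoms.1 (hchild k (X k))).2,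
    tendsto_zero_of_antitone_of_frequently_halving (fun k => weight_nonneg hD hfb _ _)
      (antitone_nat_of_succ_le fun k =>
        weight_le_of_mem_subAtoms hD hf hfb (X k).2 (hchild k (X k))) ?_⟩
  refine frequently_atTop.2 fun k => ?_
  obtain ⟨l, hkl, hne⟩ := hA.exists_succ_ne (fun k => (X k).2) k
  obtain ⟨C', hC', hC'ne⟩ :=
    hD.exists_ne_mem_subAtoms (Nat.le_succ _) (X l).2 (hchild l (X l)) hne
  have hsum := weight_add_weight_le hD hf hfb (X l).2 (hchild l (X l)) hC' hC'ne.symm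
  have hle := hmin l (X l) C' hC'
  exact ⟨l, hkl, show 2 * weight P D f (child l (X l)) (m + l + 1) ≤ _ by linarith⟩

lemma exists_kt_weight_tendsto_zero (hD : IsPartitionSeq D) (hA : AssumptionA P D)
    (hf : IsMart P D f) (hfb : martNorm P D 1 f ≠ ∞) (hE : E ∈ D m) :
    ∃ x : Kt D, x.1 m = E ∧ Tendsto (fun n => weight P D f (x.1 n) n) atTop (𝓝 0) := by
  obtain ⟨X, hX0, hX, hXsub, hlim⟩ := exists_chain_weight_tendsto_zero hD hA hf hfb hE
  obtain ⟨x, hxX⟩ := hD.exists_kt_extend hX hXsub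
  refine ⟨x, by simpa [hX0] using hxX 0, (tendsto_add_atTop_iff_nat m).1 ?_⟩
  simpa only [add_comm _ m, hxX] using hlim

lemma tendsto_add_div_measureReal_atTop (hD : IsPartitionSeq D) (hfb : martNorm P D 1 f ≠ ∞)
    {x : Kt D} (hx : ∀ n, P.real (x.1 n) ≠ 0)
    (hweight : Tendsto (fun n => weight P D f (x.1 n) n) atTop (𝓝 0)) {ε : ℝ} (hε : 0 < ε) :
    Tendsto (fun n => f n (x.1 n) + ε / P.real (x.1 n)) atTop atTop :=
  tendsto_add_div_atTop hε (fun n => measureReal_nonneg.lt_of_ne' (hx n))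
    (squeeze_zero (fun _ => measureReal_nonneg) (fun n => measureReal_le_weight hD hfb _ n) hweight)
    (squeeze_zero_norm (fun n => abs_mul_measureReal_le_weight hD hfb (x.2.1 n)) hweight)

end Chain

section Dirac

variable [MeasurableSpace Ω] {P : Measure Ω} {D : ℕ → Finset (Set Ω)}

/-- The martingale of the point mass `c • δ_x` at a point `x` of `K`. -/
def diracMart (P : Measure Ω) (x : Kt D) (c : ℝ) (n : ℕ) (A : Set Ω) : ℝ :=
  if A = x.1 n then c / P.real (x.1 n) else 0

lemma mval_diracMart (hD : IsPartitionSeq D) (x : Kt D) (c : ℝ) (n : ℕ) :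
    mval D (diracMart P x c) n = (x.1 n).indicator fun _ => c / P.real (x.1 n) := by
  ext w
  by_cases hw : w ∈ x.1 n
  · rw [mval_eq_of_mem hD _ (x.2.1 n) hw, indicator_of_mem hw, diracMart, if_pos rfl]
  · obtain ⟨A, hA, hwA⟩ := hD.exists_mem n w
    rw [indicator_of_notMem hw, mval_eq_of_mem hD _ hA hwA, diracMart,
      if_neg (by rintro rfl; exact hw hwA)]

lemma setIntegral_mval_diracMart (hD : IsPartitionSeq D) {x : Kt D}
    (hx : ∀ n, P.real (x.1 n) ≠ 0) (c : ℝ) {n l : ℕ} (hnl : n ≤ l) {A : Set Ω} (hA : A ∈ D n) :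
    ∫ w in A, mval D (diracMart P x c) l w ∂P = if A = x.1 n then c else 0 := by
  rw [mval_diracMart hD, setIntegral_indicator (hD.measurableSet (x.2.1 l)), setIntegral_const,
    smul_eq_mul]
  split_ifs with hAx
  · rw [hAx, inter_eq_self_of_subset_right (x.2.2 n l hnl), mul_div_cancel₀ _ (hx l)]
  · have hdisj : Disjoint A (x.1 l) := (hD.2.2.1 n hA (x.2.1 n) hAx).mono_right (x.2.2 n l hnl)
    rw [hdisj.inter_eq, measureReal_empty, zero_mul]

lemma isMart_diracMart (hD : IsPartitionSeq D) {x : Kt D} (hx : ∀ n, P.real (x.1 n) ≠ 0)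
    (c : ℝ) : IsMart P D (diracMart P x c) :=
  ⟨fun n _ hA => if_neg (by rintro rfl; exact hA (x.2.1 n)), fun n l hnl A hA => by
    rw [setIntegral_mval_diracMart hD hx c le_rfl hA, setIntegral_mval_diracMart hD hx c hnl hA]⟩

lemma martNorm_diracMart [IsFiniteMeasure P] (hD : IsPartitionSeq D) {x : Kt D}
    (hx : ∀ n, P.real (x.1 n) ≠ 0) (c : ℝ) :
    martNorm P D 1 (diracMart P x c) = ENNReal.ofReal |c| := by
  have hlp : ∀ n, lpNorm P D 1 (diracMart P x c) n = ENNReal.ofReal |c| := fun n => by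
    rw [lpNorm_one_eq_ofReal hD, mval_diracMart hD]
    simp only [← Real.norm_eq_abs, norm_indicator_eq_indicator_norm,
      integral_indicator (hD.measurableSet (x.2.1 n)), setIntegral_const, smul_eq_mul, norm_div,
      Real.norm_of_nonneg measureReal_nonneg, mul_div_cancel₀ _ (hx n)]
  simp [martNorm, hlp]

end Dirac

/-- Lemma (l:indukce): let `f ∈ M₁`, `η > 0`, `m ∈ ℕ` and `E ∈ D m`. Then there are a
martingale `g ∈ M₁` and a point `(F_i) ∈ K` such that `‖f - g‖₁ < η`, `F_m = E` and
`limsup g_i(F_i) = +∞`. -/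
theorem statement19 [MeasurableSpace Ω] (P : Measure Ω) [IsProbabilityMeasure P]
    (D : ℕ → Finset (Set Ω)) (hpart : IsPartitionSeq D) (hA : AssumptionA P D)
    (f : ℕ → Set Ω → ℝ) (hf : IsMart P D f) (hfb : martNorm P D 1 f ≠ ∞)
    (η : ℝ) (hη : 0 < η) (m : ℕ) (E : Set Ω) (hE : E ∈ D m) :
    ∃ g : ℕ → Set Ω → ℝ, IsMart P D g ∧ martNorm P D 1 g ≠ ∞ ∧
      martNorm P D 1 (fun k A => f k A - g k A) < ENNReal.ofReal η ∧
      ∃ x : Kt D, x.1 m = E ∧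
        Filter.limsup (fun i => ((g i (x.1 i) : ℝ) : EReal)) Filter.atTop = ⊤ := by
  obtain ⟨x, hxm, hweight⟩ := exists_kt_weight_tendsto_zero hpart hA hf hfb hE
  have hx : ∀ n, P.real (x.1 n) ≠ 0 := fun n => hA.measureReal_ne_zero (x.2.1 n)
  have hdirac := martNorm_diracMart (P := P) hpart hx
  refine ⟨fun k A => f k A + diracMart P x (η / 2) k A, hf.add hpart (isMart_diracMart hpart hx _),
    ((martNorm_add_le hpart le_rfl).trans_lt
      (ENNReal.add_lt_top.2 ⟨hfb.lt_top, by simp [hdirac]⟩)).ne, ?_, x, hxm, ?_⟩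
  · have hdiff : (fun k A => f k A - (f k A + diracMart P x (η / 2) k A))
        = diracMart P x (-(η / 2)) := by
      ext k A
      simp only [diracMart]
      split_ifs <;> ring
    rw [hdiff, hdirac, abs_neg, abs_of_pos (half_pos hη)]
    exact (ENNReal.ofReal_lt_ofReal_iff hη).2 (half_lt_self hη)
  · refine (EReal.tendsto_coe_atTop.comp ((tendsto_add_div_measureReal_atTop hpart hfb hx hweight
      (half_pos hη)).congr fun n => ?_)).limsup_eq
    simp [diracMart]

end MartingalePaper
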